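/- arXiv:1606.00958 — 2 statements merged into one kernel-verified Lean document; each statement's English description precedes it below -/
import Mathlib

section
/- Let M be a standard n×n integer matrix and 0 ≤ i < j ≤ n. If the ℓ-th row of M equals β_{ij}, then ℓ = i+1; and if the ℓ-th row of M equals −β_{ij}, then ℓ = j. -/
open Matrix

def beta (n i j : ℕ) : Fin n → ℤ := fun v => if i ≤ v.val ∧ v.val < j then 1 else 0

def B0 (n : ℕ) : Matrix (Fin n) (Fin n) ℤ := fun u v =>
  if v.val = u.val + 1 then 1 else if u.val = v.val + 1 then -1 else 0

def mutateB (n : ℕ) (k : Fin n) (B : Matrix (Fin n) (Fin n) ℤ) :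
    Matrix (Fin n) (Fin n) ℤ := fun u v =>
  if u = k ∨ v = k then -B u v
  else B u v + Int.sign (B u k) * max (B u k * B k v) 0

def mutateC (n : ℕ) (k : Fin n) (B C : Matrix (Fin n) (Fin n) ℤ) :
    Matrix (Fin n) (Fin n) ℤ := fun u v =>
  if u = k then -C u v
  else C u v + Int.sign (B u k) * max (B u k * C k v) 0

def mutate (n : ℕ) (k : Fin n)
    (p : Matrix (Fin n) (Fin n) ℤ × Matrix (Fin n) (Fin n) ℤ) :
    Matrix (Fin n) (Fin n) ℤ × Matrix (Fin n) (Fin n) ℤ :=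
  (mutateB n k p.1, mutateC n k p.1 p.2)

def Reachable (n : ℕ) (B C : Matrix (Fin n) (Fin n) ℤ) : Prop :=
  ∃ L : List (Fin n), L.foldl (fun p k => mutate n k p) (B0 n, 1) = (B, C)

def rowPerm (n : ℕ) (σ : Equiv.Perm (Fin n)) (M : Matrix (Fin n) (Fin n) ℤ) :
    Matrix (Fin n) (Fin n) ℤ := fun u v => M (σ⁻¹ u) v

def IsStandard (n : ℕ) (M : Matrix (Fin n) (Fin n) ℤ) : Prop :=
  (∀ u, M u u ≠ 0) ∧
  (∀ u v, 0 < M u v → u ≤ v) ∧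
  (∀ u v, M u v < 0 → v ≤ u) ∧
  (∀ u, ∃ i j, i < j ∧ j ≤ n ∧ (M u = beta n i j ∨ M u = -beta n i j))

def transp (n i j : ℕ) : Equiv.Perm (Fin n) :=
  if h : i < n ∧ j - 1 < n then Equiv.swap ⟨i, h.1⟩ ⟨j - 1, h.2⟩ else 1

lemma beta_ne_zero_iff {n i j : ℕ} {v : Fin n} : beta n i j v ≠ 0 ↔ i ≤ v.val ∧ v.val < j := by
  unfold beta
  split_ifs with h <;> simp [h]

lemma beta_pos_iff {n i j : ℕ} {v : Fin n} : 0 < beta n i j v ↔ i ≤ v.val ∧ v.val < j := by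
  unfold beta
  split_ifs with h <;> simp [h]

/-! The nonzero diagonal entry puts `ℓ` in the support `[i, j)` of row `ℓ`; the sign condition
at the first (resp. last) column of that support then pins `ℓ` down. -/

namespace IsStandard

variable {n : ℕ} {M : Matrix (Fin n) (Fin n) ℤ} {i j : ℕ} {ℓ : Fin n}

lemma row_eq_beta (hM : IsStandard n M) (h : M ℓ = beta n i j) : ℓ.val = i := by
  have hℓ : i ≤ ℓ.val ∧ ℓ.val < j := beta_ne_zero_iff.1 (h ▸ hM.1 ℓ)
  have hpos : 0 < M ℓ ⟨i, by omega⟩ := by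
    rw [h]
    exact beta_pos_iff.2 (show i ≤ i ∧ i < j by omega)
  exact le_antisymm (hM.2.1 _ _ hpos) hℓ.1

lemma row_eq_neg_beta (hM : IsStandard n M) (hjn : j ≤ n) (h : M ℓ = -beta n i j) :
    ℓ.val + 1 = j := by
  have hℓ : i ≤ ℓ.val ∧ ℓ.val < j := by
    have hdiag := hM.1 ℓ
    rw [h, Pi.neg_apply, neg_ne_zero] at hdiag
    exact beta_ne_zero_iff.1 hdiag
  have hneg : M ℓ ⟨j - 1, by omega⟩ < 0 := by
    rw [h, Pi.neg_apply, neg_neg_iff_pos]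
    exact beta_pos_iff.2 (show i ≤ j - 1 ∧ j - 1 < j by omega)
  have : j - 1 ≤ ℓ.val := hM.2.2.1 _ _ hneg
  omega

end IsStandard

theorem standard_row_position_general (n : ℕ) (M : Matrix (Fin n) (Fin n) ℤ)
    (hM : IsStandard n M) (i j : ℕ) (hjn : j ≤ n) (ℓ : Fin n) :
    (M ℓ = beta n i j → ℓ.val = i) ∧ (M ℓ = -beta n i j → ℓ.val + 1 = j) :=
  ⟨hM.row_eq_beta, hM.row_eq_neg_beta hjn⟩

/-- in a standard matrix, a row equal to `β_{ij}` must be the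
`(i+1)`-st row, and a row equal to `-β_{ij}` must be the `j`-th row
(rows written here 0-based, so the 1-based row `ℓ` is `ℓ.val + 1`). -/
theorem standard_row_position (n : ℕ) (M : Matrix (Fin n) (Fin n) ℤ)
    (hM : IsStandard n M) (i j : ℕ) (hij : i < j) (hjn : j ≤ n) (ℓ : Fin n) :
    (M ℓ = beta n i j → ℓ.val = i) ∧ (M ℓ = -beta n i j → ℓ.val + 1 = j) :=
  standard_row_position_general n M hM i j hjn ℓ
end

section
/- Let M and M′ be standard n×n integer matrices and σ, σ′ permutations of {1,…,n}. If σ(M) = σ′(M′), then σ = σ′ and M = M′. In particular, a matrix C admits at most one representation C = σ(M) with M standard, so the associated permutation σ of such a matrix C is well defined. -/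
open Matrix

lemma beta_nonneg (n i j : ℕ) (v : Fin n) : 0 ≤ beta n i j v := by
  unfold beta
  split <;> norm_num

namespace IsStandard

variable {n : ℕ} {M M' : Matrix (Fin n) (Fin n) ℤ}

lemma row_nonneg_or_nonpos (hM : IsStandard n M) (u : Fin n) :
    (∀ v, 0 ≤ M u v) ∨ (∀ v, M u v ≤ 0) := by
  obtain ⟨i, j, -, -, hrow | hrow⟩ := hM.2.2.2 u
  · exact .inl fun v => hrow ▸ beta_nonneg n i j v
  · exact .inr fun v => by simpa [hrow] using beta_nonneg n i j v

/-- Equal rows sit at equal indices: the common row is nonzero at both diagonal positions `u`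
and `u'` with one and the same sign, and the sign condition then forces `u ≤ u'` and `u' ≤ u`. -/
lemma eq_of_row_eq (hM : IsStandard n M) (hM' : IsStandard n M') {u u' : Fin n}
    (h : M u = M' u') : u = u' := by
  have hu : M u u ≠ 0 := hM.1 u
  have hu' : M u u' ≠ 0 := h ▸ hM'.1 u'
  have hswap : M' u' u = M u u := by rw [h]
  rcases hM.row_nonneg_or_nonpos u with hpos | hneg
  · exact le_antisymm (hM.2.1 u u' ((hpos u').lt_of_ne' hu'))
      (hM'.2.1 u' u (hswap ▸ (hpos u).lt_of_ne' hu))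
  · exact le_antisymm (hM'.2.2.1 u' u (hswap ▸ (hneg u).lt_of_ne hu))
      (hM.2.2.1 u u' ((hneg u').lt_of_ne hu'))

end IsStandard

/-- uniqueness of the representation `C = σ(M)` with `M` standard;
hence the associated permutation of such a matrix is well defined. -/
theorem standard_representation_unique (n : ℕ)
    (M M' : Matrix (Fin n) (Fin n) ℤ) (σ σ' : Equiv.Perm (Fin n))
    (hM : IsStandard n M) (hM' : IsStandard n M')
    (h : rowPerm n σ M = rowPerm n σ' M') :
    σ = σ' ∧ M = M' := by
  have hrow : ∀ m, M (σ⁻¹ m) = M' (σ'⁻¹ m) := fun m => congrFun h m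
  have hσ : σ = σ' :=
    inv_injective <| Equiv.ext fun m => hM.eq_of_row_eq hM' (hrow m)
  subst hσ
  refine ⟨rfl, funext fun u => ?_⟩
  simpa using hrow (σ u)
end
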